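/- Let n ≥ 1, k ≥ 2, m ≥ 1 and r ≤ m be natural numbers. Let G₁, …, G_m be simple graphs, each on n vertices, and suppose that at most r of them fail to be k-Ramsey. Then the iterated Naor product G₁ · (G₂ · ( ⋯ · G_m)), which is a graph on n^m vertices, is t-Ramsey for t = (n+1)^r · k^(m−r). -/

import Mathlib

universe u

/-- The Naor product of two simple graphs: vertices `(u₁,u₂)` and `(v₁,v₂)` are adjacent
iff `u₁` is adjacent to `v₁` in `G₁`, or `u₁ = v₁` and `u₂` is adjacent to `v₂` in `G₂`. -/
def naorProd {V₁ V₂ : Type*} (G₁ : SimpleGraph V₁) (G₂ : SimpleGraph V₂) :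
    SimpleGraph (V₁ × V₂) where
  Adj x y := G₁.Adj x.1 y.1 ∨ (x.1 = y.1 ∧ G₂.Adj x.2 y.2)
  symm := ⟨by
    rintro ⟨u₁, u₂⟩ ⟨v₁, v₂⟩ (h | ⟨h₁, h₂⟩)
    · exact Or.inl h.symm
    · exact Or.inr ⟨h₁.symm, h₂.symm⟩⟩
  loopless := ⟨by
    rintro ⟨u₁, u₂⟩ (h | ⟨-, h⟩)
    · exact G₁.irrefl h
    · exact G₂.irrefl h⟩

/-- The vertex type of the iterated (right-folded) Naor product of `m+1` graphs. -/
def naorVertex : (m : ℕ) → (Fin (m + 1) → Type u) → Type u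
  | 0, V => V 0
  | m + 1, V => V 0 × naorVertex m (fun i => V i.succ)

/-- The iterated (right-folded) Naor product `G₀ · (G₁ · ( ⋯ · G_m))` of `m+1` graphs. -/
def iterNaorProd : (m : ℕ) → (V : Fin (m + 1) → Type u) →
    ((i : Fin (m + 1)) → SimpleGraph (V i)) → SimpleGraph (naorVertex m V)
  | 0, _, G => G 0
  | m + 1, V, G => naorProd (G 0) (iterNaorProd m (fun i => V i.succ) (fun i => G i.succ))

/-- A simple graph is `k`-Ramsey if it has no clique of size `k` and no
independent set of size `k`. -/
def IsRamsey {V : Type*} (G : SimpleGraph V) (k : ℕ) : Prop :=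
  G.CliqueFree k ∧ Gᶜ.CliqueFree k

/-!
A clique of `G₁ · G₂` projects onto a clique of `G₁`, and its fibre over each vertex is a clique
of `G₂`, so clique-freeness is submultiplicative under the Naor product. Complementation commutes
with the product, so the same holds for independent sets, and by induction `G₀ · ( ⋯ · Gₘ)` is
`∏ cᵢ`-Ramsey as soon as each `Gᵢ` is `cᵢ`-Ramsey. Take `cᵢ = n + 1` on a set of exactly `r`
indices containing all non-`k`-Ramsey graphs (every graph on `n` vertices is `(n+1)`-Ramsey), and
`cᵢ = k` elsewhere.
-/

open Finset SimpleGraph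

theorem SimpleGraph.IsClique.card_lt_of_cliqueFree {V : Type*} {G : SimpleGraph V}
    {s : Finset V} {n : ℕ} (hs : G.IsClique (s : Set V)) (hG : G.CliqueFree n) : #s < n := by
  by_contra! hn
  obtain ⟨t, hts, rfl⟩ := exists_subset_card_eq hn
  exact hG t ⟨hs.subset (coe_subset.2 hts), rfl⟩

section naorProd

variable {V₁ V₂ : Type*} {G₁ : SimpleGraph V₁} {G₂ : SimpleGraph V₂} {s : Finset (V₁ × V₂)}

theorem naorProd_isClique_image_fst [DecidableEq V₁]
    (hs : (naorProd G₁ G₂).IsClique (s : Set (V₁ × V₂))) :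
    G₁.IsClique (s.image Prod.fst : Set V₁) := by
  rw [coe_image]
  rintro _ ⟨x, hx, rfl⟩ _ ⟨y, hy, rfl⟩ hne
  exact (hs hx hy fun h => hne (h ▸ rfl)).resolve_right fun h => hne h.1

theorem naorProd_card_fiber_lt_of_cliqueFree [DecidableEq V₁] {b : ℕ}
    (hs : (naorProd G₁ G₂).IsClique (s : Set (V₁ × V₂))) (h₂ : G₂.CliqueFree b) (v : V₁) :
    #{x ∈ s | x.1 = v} < b := by
  classical
  have hinj : Set.InjOn Prod.snd (({x ∈ s | x.1 = v} : Finset (V₁ × V₂)) : Set (V₁ × V₂)) := by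
    intro x hx y hy hxy
    simp only [coe_filter, Set.mem_ofPred_eq] at hx hy
    exact Prod.ext (hx.2.trans hy.2.symm) hxy
  have hclique : G₂.IsClique (({x ∈ s | x.1 = v}.image Prod.snd : Finset V₂) : Set V₂) := by
    rw [coe_image]
    rintro _ ⟨x, hx, rfl⟩ _ ⟨y, hy, rfl⟩ hne
    simp only [coe_filter, Set.mem_ofPred_eq] at hx hy
    exact ((hs hx.1 hy.1 fun h => hne (h ▸ rfl)).resolve_left
      fun h => G₁.irrefl (hx.2 ▸ hy.2 ▸ h)).2
  simpa only [card_image_of_injOn hinj] using hclique.card_lt_of_cliqueFree h₂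

theorem naorProd_cliqueFree_mul {a b : ℕ} (h₁ : G₁.CliqueFree a) (h₂ : G₂.CliqueFree b) :
    (naorProd G₁ G₂).CliqueFree (a * b) := by
  classical
  rintro s ⟨hs, hcard⟩
  have ha : 0 < a := Nat.pos_of_ne_zero fun h => not_cliqueFree_zero (h ▸ h₁)
  have hb : 0 < b := Nat.pos_of_ne_zero fun h => not_cliqueFree_zero (h ▸ h₂)
  have hfst : #(s.image Prod.fst) ≤ a - 1 := by
    have := (naorProd_isClique_image_fst hs).card_lt_of_cliqueFree h₁
    omega
  have hfib : ∀ v ∈ s.image Prod.fst, #{x ∈ s | x.1 = v} ≤ b - 1 := fun v _ => by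
    have := naorProd_card_fiber_lt_of_cliqueFree hs h₂ v
    omega
  have : a * b ≤ (b - 1) * (a - 1) := calc
    a * b = #s := hcard.symm
    _ ≤ (b - 1) * #(s.image Prod.fst) := card_le_mul_card_image s (b - 1) hfib
    _ ≤ (b - 1) * (a - 1) := Nat.mul_le_mul_left _ hfst
  have : (b - 1) * (a - 1) < a * b := by
    rw [mul_comm a]; exact Nat.mul_lt_mul'' (by omega) (by omega)
  omega

theorem naorProd_compl (G₁ : SimpleGraph V₁) (G₂ : SimpleGraph V₂) :
    (naorProd G₁ G₂)ᶜ = naorProd G₁ᶜ G₂ᶜ := by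
  ext ⟨x₁, x₂⟩ ⟨y₁, y₂⟩
  by_cases h : x₁ = y₁
  · subst h
    simp [naorProd, Prod.ext_iff]
  · simp [naorProd, Prod.ext_iff, h]

end naorProd

theorem iterNaorProd_compl : ∀ (m : ℕ) (V : Fin (m + 1) → Type u)
    (G : (i : Fin (m + 1)) → SimpleGraph (V i)),
    (iterNaorProd m V G)ᶜ = iterNaorProd m V (fun i => (G i)ᶜ)
  | 0, _, _ => rfl
  | m + 1, _, _ => by
    show (naorProd _ _)ᶜ = naorProd _ _
    rw [naorProd_compl, iterNaorProd_compl m]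

theorem iterNaorProd_cliqueFree_prod : ∀ {m : ℕ} {V : Fin (m + 1) → Type u}
    {G : (i : Fin (m + 1)) → SimpleGraph (V i)} {c : Fin (m + 1) → ℕ},
    (∀ i, (G i).CliqueFree (c i)) → (iterNaorProd m V G).CliqueFree (∏ i, c i)
  | 0, _, _, c, h => by rw [Fin.prod_univ_one]; exact h 0
  | m + 1, _, _, c, h => by
    rw [Fin.prod_univ_succ]
    exact naorProd_cliqueFree_mul (h 0) (iterNaorProd_cliqueFree_prod fun i => h i.succ)

theorem iterNaorProd_isRamsey_prod {m : ℕ} {V : Fin (m + 1) → Type u}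
    {G : (i : Fin (m + 1)) → SimpleGraph (V i)} {c : Fin (m + 1) → ℕ}
    (h : ∀ i, IsRamsey (G i) (c i)) : IsRamsey (iterNaorProd m V G) (∏ i, c i) :=
  ⟨iterNaorProd_cliqueFree_prod fun i => (h i).1, by
    rw [iterNaorProd_compl]; exact iterNaorProd_cliqueFree_prod fun i => (h i).2⟩

theorem isRamsey_of_card_lt {V : Type*} [Fintype V] (G : SimpleGraph V) {k : ℕ}
    (h : Fintype.card V < k) : IsRamsey G k :=
  ⟨cliqueFree_of_card_lt h, cliqueFree_of_card_lt h⟩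

open Classical in
theorem iterNaorProd_isRamsey_of_mostly_ramsey_general (n k m r : ℕ)
    (hr : r ≤ m + 1)
    (G : Fin (m + 1) → SimpleGraph (Fin n))
    (hG : (Finset.univ.filter (fun i => ¬ IsRamsey (G i) k)).card ≤ r) :
    IsRamsey (iterNaorProd m (fun _ => Fin n) G) ((n + 1) ^ r * k ^ (m + 1 - r)) := by
  obtain ⟨B, hbad, -, hB⟩ := exists_subsuperset_card_eq (subset_univ _) hG (by simpa using hr)
  have hRamsey : ∀ i, IsRamsey (G i) (if i ∈ B then n + 1 else k) := by
    intro i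
    split_ifs with hi
    · exact isRamsey_of_card_lt _ (by simp)
    · by_contra h
      exact hi (hbad (by simpa using h))
  convert iterNaorProd_isRamsey_prod hRamsey using 1
  rw [prod_ite, prod_const, prod_const, filter_mem_eq_of_subset (subset_univ B),
    filter_notMem_eq_sdiff, card_univ_sdiff, hB, Fintype.card_fin, mul_comm]

open Classical in
/-- If at most `r` of the `m+1` graphs `G 0, …, G m`, each on `n` vertices, fail to be
`k`-Ramsey, then their iterated Naor product (a graph on `n^(m+1)` vertices) is
`t`-Ramsey for `t = (n+1)^r · k^(m+1-r)`. -/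
theorem iterNaorProd_isRamsey_of_mostly_ramsey (n k m r : ℕ)
    (hn : 1 ≤ n) (hk : 2 ≤ k) (hr : r ≤ m + 1)
    (G : Fin (m + 1) → SimpleGraph (Fin n))
    (hG : (Finset.univ.filter (fun i => ¬ IsRamsey (G i) k)).card ≤ r) :
    IsRamsey (iterNaorProd m (fun _ => Fin n) G) ((n + 1) ^ r * k ^ (m + 1 - r)) :=
  iterNaorProd_isRamsey_of_mostly_ramsey_general n k m r hr G hG
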